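/- arXiv:2506.00797 — 6 statements merged into one kernel-verified Lean document; each statement's English description precedes it below -/
import Mathlib

section
/- Let G_c = (N, E_c) be an undirected graph and G_d = (N, E_d) a directed graph on N = {1,…,n}. Suppose that for every i ∈ N, N_d(i) = N_c(i^{[+]}) and every j ∈ N_d(i) satisfies j < i. Then for every k ∈ {1,…,n−1}, N_d[k] ⊇ N_d(k^+). -/
/-- `N_c(S)`: the set of neighbors of a set `S` of vertices in an undirected graph,
excluding `S` itself. -/
def ncSet {n : ℕ} (Gc : SimpleGraph (Fin n)) (S : Set (Fin n)) : Set (Fin n) :=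
  (⋃ j ∈ S, Gc.neighborSet j) \ S

/-- if `N_d(i) = N_c(i^{[+]})` and every `j ∈ N_d(i)` satisfies `j < i`,
then `N_d[k] ⊇ N_d(k^+)` for every non-last agent `k`. Here the directed graph is given
by its edge relation `Ed` (so `N_d(i) = {j | Ed j i}`, `N_d[k] = N_d(k) ∪ {k}`, and for a
set `S`, `N_d(S) = (⋃ i ∈ S, N_d(i)) \ S`). -/
theorem stmt1 {n : ℕ} (Gc : SimpleGraph (Fin n)) (Ed : Fin n → Fin n → Prop)
    (h1 : ∀ i : Fin n, {j : Fin n | Ed j i} = ncSet Gc {j : Fin n | i ≤ j})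
    (h2 : ∀ i j : Fin n, Ed j i → j < i) (k : Fin n) (hk : (k : ℕ) + 1 < n) :
    ((⋃ i ∈ {i : Fin n | k < i}, {j : Fin n | Ed j i}) \ {i : Fin n | k < i})
      ⊆ insert k {j : Fin n | Ed j k} := by
  rintro x ⟨hx1, hx2⟩
  simp only [Set.mem_iUnion, Set.mem_setOf_eq] at hx1 hx2
  obtain ⟨i, hki, hxi⟩ := hx1
  rcases eq_or_ne x k with h | h
  · exact h ▸ Set.mem_insert x _
  · right
    have hxk : x < k := lt_of_le_of_ne (not_lt.mp hx2) h
    have hxi' : x ∈ ncSet Gc {j : Fin n | i ≤ j} := by rw [← h1 i]; exact hxi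
    obtain ⟨hmem, -⟩ := hxi'
    simp only [Set.mem_iUnion, SimpleGraph.mem_neighborSet, Set.mem_setOf_eq] at hmem
    obtain ⟨m, him, hadj⟩ := hmem
    have : x ∈ ncSet Gc {j : Fin n | k ≤ j} := by
      constructor
      · simp only [Set.mem_iUnion, SimpleGraph.mem_neighborSet, Set.mem_setOf_eq]
        exact ⟨m, le_trans hki.le him, hadj⟩
      · simp only [Set.mem_setOf_eq]
        exact not_le.mpr hxk
    rwa [← h1 k] at this
end

section
/- Let G_c = (N, E_c) be a CG of Q : S × A → ℝ, and let G_d = (N, E_d) be a directed graph such that for every k ∈ N, N_d(k) ⊇ N_c(k^{[+]}) and every j ∈ N_d(k) satisfies j < k. Then for every i ∈ N there exist functions Q_1 : S × ∏_{j ∈ N_d(i) ∪ i^{[+]}} A_j → ℝ and Q_2 : S × ∏_{j ∈ i^-} A_j → ℝ such that Q(s, a) = Q_1(s, a_{i^{[+]}}, a_{N_d(i)}) + Q_2(s, a_{i^-}) for all s ∈ S and a ∈ A. -/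
/-- `G_c` is a coordination graph (CG) of `Q : S × A → ℝ`: there is a family of local
value functions `q i j`, one for each edge `(i,j) ∈ E_c` (with `i < j`, so each
undirected edge is counted once; the family vanishes off the edges), such that
`Q(s,a) = Σ_{(i,j)∈E_c} q i j (s, a_i, a_j)`. -/
def IsCG {n : ℕ} {St : Type*} {A : Fin n → Type*} (Gc : SimpleGraph (Fin n))
    (Q : St → (∀ i, A i) → ℝ) : Prop :=
  ∃ q : (i : Fin n) → (j : Fin n) → St → A i → A j → ℝ,
    (∀ i j, ¬(i < j ∧ Gc.Adj i j) → ∀ s ai aj, q i j s ai aj = 0) ∧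
    ∀ s a, Q s a = ∑ i, ∑ j, q i j s (a i) (a j)

/-- if `G_c` is a CG of `Q` and `G_d` (given by its edge relation `Ed`, so
`N_d(i) = {j | Ed j i}`) satisfies `N_d(k) ⊇ N_c(k^{[+]})` with `j < k` for all
`j ∈ N_d(k)`, then for every `i` the function `Q` splits as
`Q(s,a) = Q₁(s, a_{i^{[+]}}, a_{N_d(i)}) + Q₂(s, a_{i^-})`. -/
theorem stmt3 {n : ℕ} {St : Type*} {A : Fin n → Type*}
    (Gc : SimpleGraph (Fin n)) (Q : St → (∀ i, A i) → ℝ) (hCG : IsCG Gc Q)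
    (Ed : Fin n → Fin n → Prop)
    (h1 : ∀ k : Fin n, ncSet Gc {j : Fin n | k ≤ j} ⊆ {j : Fin n | Ed j k})
    (h2 : ∀ k j : Fin n, Ed j k → j < k) :
    ∀ i : Fin n,
      ∃ (Q1 : St → ((j : {j : Fin n // Ed j i ∨ i ≤ j}) → A j.1) → ℝ)
        (Q2 : St → ((j : {j : Fin n // j < i}) → A j.1) → ℝ),
        ∀ (s : St) (a : ∀ j, A j),
          Q s a = Q1 s (fun j => a j.1) + Q2 s (fun j => a j.1) := by
  classical
  obtain ⟨q, hq0, hq⟩ := hCG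
  intro i
  have key : ∀ j k : Fin n, j < k → Gc.Adj j k → i ≤ k → Ed j i ∨ i ≤ j := by
    intro j k hjk hadj hik
    rcases le_or_gt i j with h | h
    · exact Or.inr h
    · refine Or.inl (h1 i ⟨?_, ?_⟩)
      · exact Set.mem_biUnion hik hadj.symm
      · exact fun hh => absurd hh (not_le.mpr h)
  refine ⟨fun s b => ∑ j, ∑ k, if h : j < k ∧ Gc.Adj j k ∧ i ≤ k then
      q j k s (b ⟨j, key j k h.1 h.2.1 h.2.2⟩) (b ⟨k, Or.inr h.2.2⟩) else 0,
    fun s c => ∑ j, ∑ k, if h : j < k ∧ Gc.Adj j k ∧ k < i then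
      q j k s (c ⟨j, h.1.trans h.2.2⟩) (c ⟨k, h.2.2⟩) else 0, ?_⟩
  intro s a
  rw [hq s a, ← Finset.sum_add_distrib]
  refine Finset.sum_congr rfl fun j _ => ?_
  rw [← Finset.sum_add_distrib]
  refine Finset.sum_congr rfl fun k _ => ?_
  by_cases he : j < k ∧ Gc.Adj j k
  · rcases le_or_gt i k with hik | hki
    · rw [dif_pos ⟨he.1, he.2, hik⟩, dif_neg (fun h => absurd h.2.2 (not_lt.mpr hik))]
      ring
    · rw [dif_neg (fun h => absurd h.2.2 (not_le.mpr hki)), dif_pos ⟨he.1, he.2, hki⟩]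
      ring
  · rw [hq0 j k he, dif_neg (fun h => he ⟨h.1, h.2.1⟩), dif_neg (fun h => he ⟨h.1, h.2.1⟩)]
    ring
end

section
/- Let G_c = (N, E_c) be a CG of Q : S × A → ℝ, and let π be a stochastic action-dependent joint policy associated with an ADG G_d such that N_d(k) = N_c(k^{[+]}) for every k ∈ N. Fix i ∈ N, s ∈ S and a'_{i^-} ∈ ∏_{j < i} A_j. For a probability distribution p on A_i define F(p) := E_{a_i∼p, π_{-N_d[i]}}[Q(s, a'_{N_d(i)}, a_i, a_{-N_d[i]})], the clamped expectation in which the coordinates in N_d(i) are clamped to a'_{N_d(i)}, agent i's action is drawn from p, and the agents outside N_d[i] draw from their policies; and define G(p) := E_{a_i∼p, π_{i^+}}[Q(s, a'_{i^-}, a_i, a_{i^+})], in which all coordinates in i^- are clamped to a'_{i^-}, agent i's action is drawn from p, and the agents in i^+ draw from their policies. Then the set of distributions p maximizing F equals the set of distributions p maximizing G. -/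
/-- Combine clamped values `a'` (on the coordinates in `F`) with free values `b`
(on the coordinates outside `F`) into a full joint action. -/
def comb {n : ℕ} {A : Fin n → Type*} (F : Finset (Fin n)) (a' : ∀ i, A i)
    (b : (j : {j : Fin n // j ∉ F}) → A j.1) : ∀ i, A i :=
  fun m => if h : m ∉ F then b ⟨m, h⟩ else a' m

/-- The clamped expectation `E_{π_{-F}}[f(s, a'_F, a_{-F})]`: the coordinates in `F`
are clamped to the values of `a'`, and the agents outside `F` draw their actions from
their (action-dependent) policies, each `π j` conditioning on the actions of its
in-neighbors `N_d(j) = {k | Ed k j}` in the combined action vector. -/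
def clampedExp {n : ℕ} {St : Type*} {A : Fin n → Type*} [∀ i, Fintype (A i)]
    (Ed : Fin n → Fin n → Prop) [DecidableRel Ed]
    (π : (i : Fin n) → St → ((j : {j : Fin n // Ed j i}) → A j.1) → A i → ℝ)
    (F : Finset (Fin n)) (s : St) (a' : ∀ i, A i)
    (f : (∀ i, A i) → ℝ) : ℝ :=
  ∑ b : (j : {j : Fin n // j ∉ F}) → A j.1,
    (∏ j : {j : Fin n // j ∉ F},
        π j.1 s (fun k => comb F a' b k.1) (b j)) * f (comb F a' b)

/-- `p` is a probability distribution on the finite type `α`. -/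
def IsDist {α : Type*} [Fintype α] (p : α → ℝ) : Prop :=
  (∀ x, 0 ≤ p x) ∧ ∑ x, p x = 1

universe u v

lemma sum_prod_one : ∀ (N : ℕ) {ι : Type u} [Fintype ι] [LinearOrder ι]
    {A : ι → Type v} [∀ j, Fintype (A j)] [∀ j, Nonempty (A j)]
    [Fintype ((k : ι) → A k)],
    Fintype.card ι = N →
    ∀ (f : (j : ι) → ((k : ι) → A k) → A j → ℝ),
    (∀ (j : ι) (b b' : (k : ι) → A k), (∀ k, k < j → b k = b' k) → f j b = f j b') →
    (∀ j b, ∑ x, f j b x = 1) →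
    ∑ b : (k : ι) → A k, ∏ j, f j b (b j) = 1 := by
  intro N
  induction N with
  | zero =>
    intro ι _ _ A _ _ _ hN f hdep hsum
    haveI : IsEmpty ι := Fintype.card_eq_zero_iff.mp hN
    have h1 : ∀ b : (k : ι) → A k, ∏ j, f j b (b j) = 1 := by
      intro b; rw [Finset.univ_eq_empty, Finset.prod_empty]
    haveI : Unique ((k : ι) → A k) := Pi.uniqueOfIsEmpty _
    rw [Finset.sum_congr rfl (fun b _ => h1 b), Finset.sum_const, nsmul_eq_mul, mul_one]
    rw [Finset.card_univ, Fintype.card_unique]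
    norm_num
  | succ N ih =>
    intro ι _ _ A _ _ _ hN f hdep hsum
    haveI hne : Nonempty ι := by
      rw [← Fintype.card_pos_iff, hN]; omega
    classical
    set m : ι := Finset.univ.max' Finset.univ_nonempty with hm_def
    have hm : ∀ j : ι, j ≤ m := fun j => Finset.le_max' _ _ (Finset.mem_univ j)
    obtain ⟨x₀⟩ : Nonempty (A m) := inferInstance
    set e := Equiv.piSplitAt m A with he
    have hcard : Fintype.card {j : ι // j ≠ m} = N := by
      have h := Fintype.card_subtype_compl (fun j : ι => j = m)
      simp only [Fintype.card_subtype_eq] at h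
      have : Fintype.card {j : ι // j ≠ m} = Fintype.card {j : ι // ¬ j = m} := rfl
      omega
    have happ : ∀ (x : A m) (b' : (j : {j : ι // j ≠ m}) → A j.1) (k : ι) (hk : k ≠ m),
        e.symm (x, b') k = b' ⟨k, hk⟩ := by
      intro x b' k hk
      simp [he, Equiv.piSplitAt, hk]
    have happm : ∀ (x : A m) (b' : (j : {j : ι // j ≠ m}) → A j.1),
        e.symm (x, b') m = x := by
      intro x b'
      simp [he, Equiv.piSplitAt]
    have hsame : ∀ (j : ι) (x x' : A m) b', f j (e.symm (x, b')) = f j (e.symm (x', b')) := by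
      intro j x x' b'
      apply hdep
      intro k hk
      have hkm : k ≠ m := ne_of_lt (lt_of_lt_of_le hk (hm j))
      rw [happ x b' k hkm, happ x' b' k hkm]
    calc ∑ b : (k : ι) → A k, ∏ j, f j b (b j)
        = ∑ p : A m × ((j : {j : ι // j ≠ m}) → A j.1),
            ∏ j, f j (e.symm p) (e.symm p j) := (Equiv.sum_comp e.symm _).symm
      _ = ∑ x : A m, ∑ b' : (j : {j : ι // j ≠ m}) → A j.1,
            ∏ j, f j (e.symm (x, b')) (e.symm (x, b') j) := Fintype.sum_prod_type _
      _ = ∑ x : A m, ∑ b' : (j : {j : ι // j ≠ m}) → A j.1,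
            f m (e.symm (x₀, b')) x *
              ∏ j : {j : ι // j ≠ m}, f j.1 (e.symm (x₀, b')) (b' j) := by
          apply Finset.sum_congr rfl; intro x _
          apply Finset.sum_congr rfl; intro b' _
          rw [Finset.prod_eq_mul_prod_sdiff_singleton_of_mem (Finset.mem_univ m)
            (fun j => f j (e.symm (x, b')) (e.symm (x, b') j))]
          rw [Finset.prod_subtype (p := fun j : ι => j ≠ m) (Finset.univ \ {m}) (by simp)
            (fun j => f j (e.symm (x, b')) (e.symm (x, b') j))]
          congr 1
          · rw [happm, hsame m x x₀]
          · apply Finset.prod_congr rfl; intro j _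
            rw [hsame j.1 x x₀, happ x b' j.1 j.2]
      _ = ∑ b' : (j : {j : ι // j ≠ m}) → A j.1,
            ∏ j : {j : ι // j ≠ m}, f j.1 (e.symm (x₀, b')) (b' j) := by
          rw [Finset.sum_comm]
          apply Finset.sum_congr rfl; intro b' _
          rw [← Finset.sum_mul, hsum m (e.symm (x₀, b')), one_mul]
      _ = 1 := by
          apply ih hcard (fun j b' => f j.1 (e.symm (x₀, b')))
          · intro j b' b'' hb
            apply hdep
            intro k hk
            have hkm : k ≠ m := ne_of_lt (lt_of_lt_of_le hk (hm j.1))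
            rw [happ x₀ b' k hkm, happ x₀ b'' k hkm]
            exact hb ⟨k, hkm⟩ (Subtype.mk_lt_mk.mpr hk)
          · intro j b'
            exact hsum j.1 (e.symm (x₀, b'))

/-- Split the free coordinates of `F` into those in `F' \ F` and those outside `F'`. -/
def mergeEquiv {n : ℕ} {A : Fin n → Type*} (F F' : Finset (Fin n)) (hFF : F ⊆ F') :
    ((j : {j : Fin n // j ∈ F' \ F}) → A j.1) × ((j : {j : Fin n // j ∉ F'}) → A j.1) ≃
      ((j : {j : Fin n // j ∉ F}) → A j.1) where
  toFun p := fun j => if h : j.1 ∈ F' then p.1 ⟨j.1, Finset.mem_sdiff.mpr ⟨h, j.2⟩⟩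
      else p.2 ⟨j.1, h⟩
  invFun b := (fun j => b ⟨j.1, (Finset.mem_sdiff.mp j.2).2⟩,
      fun j => b ⟨j.1, fun h => j.2 (hFF h)⟩)
  left_inv p := by
    ext j
    · have h := Finset.mem_sdiff.mp j.2
      simp only [h.1, dif_pos]
    · simp only [dif_neg (j.2 : ¬ _)]
  right_inv b := by
    funext j
    by_cases h : j.1 ∈ F' <;> simp [h]

lemma mergeEquiv_apply_mem {n : ℕ} {A : Fin n → Type*} (F F' : Finset (Fin n)) (hFF : F ⊆ F')
    (d : (j : {j : Fin n // j ∈ F' \ F}) → A j.1) (b' : (j : {j : Fin n // j ∉ F'}) → A j.1)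
    (k : Fin n) (hk : k ∉ F) (hk' : k ∈ F') :
    mergeEquiv F F' hFF (d, b') ⟨k, hk⟩ = d ⟨k, Finset.mem_sdiff.mpr ⟨hk', hk⟩⟩ := by
  simp only [mergeEquiv, Equiv.coe_fn_mk, hk', dif_pos]

lemma mergeEquiv_apply_notMem {n : ℕ} {A : Fin n → Type*} (F F' : Finset (Fin n)) (hFF : F ⊆ F')
    (d : (j : {j : Fin n // j ∈ F' \ F}) → A j.1) (b' : (j : {j : Fin n // j ∉ F'}) → A j.1)
    (k : Fin n) (hk : k ∉ F) (hk' : k ∉ F') :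
    mergeEquiv F F' hFF (d, b') ⟨k, hk⟩ = b' ⟨k, hk'⟩ := by
  simp only [mergeEquiv, Equiv.coe_fn_mk, hk', dif_neg, not_false_iff]

lemma prod_split {n : ℕ} (F F' : Finset (Fin n)) (hFF : F ⊆ F') (X : {j : Fin n // j ∉ F} → ℝ) :
    ∏ j : {j : Fin n // j ∉ F}, X j =
    (∏ j : {j : Fin n // j ∈ F' \ F}, X ⟨j.1, (Finset.mem_sdiff.mp j.2).2⟩) *
    (∏ j : {j : Fin n // j ∉ F'}, X ⟨j.1, fun h => j.2 (hFF h)⟩) := by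
  classical
  set Y : Fin n → ℝ := fun m => if h : m ∉ F then X ⟨m, h⟩ else 1 with hY
  have e1 : ∏ j : {j : Fin n // j ∉ F}, X j = ∏ m ∈ Fᶜ, Y m := by
    rw [Finset.prod_subtype (p := fun j : Fin n => j ∉ F) Fᶜ (by simp) Y]
    apply Finset.prod_congr rfl
    intro j _
    simp only [hY]
    rw [dif_pos j.2]
  have hsplit : Fᶜ = (F' \ F) ∪ F'ᶜ := by
    ext m
    simp only [Finset.mem_compl, Finset.mem_union, Finset.mem_sdiff]
    constructor
    · intro h
      by_cases h' : m ∈ F'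
      · exact Or.inl ⟨h', h⟩
      · exact Or.inr h'
    · rintro (⟨-, h⟩ | h)
      · exact h
      · exact fun hm => h (hFF hm)
  have hdisj : Disjoint (F' \ F) F'ᶜ :=
    Disjoint.mono_left Finset.sdiff_subset disjoint_compl_right
  have e2 : ∏ m ∈ (F' \ F), Y m =
      ∏ j : {j : Fin n // j ∈ F' \ F}, X ⟨j.1, (Finset.mem_sdiff.mp j.2).2⟩ := by
    rw [Finset.prod_subtype (p := fun j : Fin n => j ∈ F' \ F) (F' \ F) (by simp) Y]
    apply Finset.prod_congr rfl
    intro j _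
    simp only [hY]
    exact dif_pos (Finset.mem_sdiff.mp j.2).2
  have e3 : ∏ m ∈ F'ᶜ, Y m =
      ∏ j : {j : Fin n // j ∉ F'}, X ⟨j.1, fun h => j.2 (hFF h)⟩ := by
    rw [Finset.prod_subtype (p := fun j : Fin n => j ∉ F') F'ᶜ (by simp) Y]
    apply Finset.prod_congr rfl
    intro j _
    have hjF : j.1 ∉ F := fun h => j.2 (hFF h)
    simp only [hY]
    exact dif_pos hjF
  rw [e1, hsplit, Finset.prod_union hdisj, e2, e3]

section
variable {n : ℕ} {St : Type*} {A : Fin n → Type*} [∀ i, Fintype (A i)] [∀ i, Nonempty (A i)]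
    (Ed : Fin n → Fin n → Prop) [DecidableRel Ed]
    (π : (i : Fin n) → St → ((j : {j : Fin n // Ed j i}) → A j.1) → A i → ℝ)

lemma clampedExp_congr' (F : Finset (Fin n)) (s : St) (a a2 : ∀ i, A i) (f : (∀ i, A i) → ℝ)
    (hcond : ∀ j : Fin n, j ∉ F → ∀ k, Ed k j → a k = a2 k)
    (hf : ∀ b, f (comb F a b) = f (comb F a2 b)) :
    clampedExp Ed π F s a f = clampedExp Ed π F s a2 f := by
  unfold clampedExp
  apply Finset.sum_congr rfl
  intro b _
  rw [hf b]
  congr 1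
  apply Finset.prod_congr rfl
  intro j _
  have hc : (fun k : {k : Fin n // Ed k j.1} => comb F a b k.1) =
      (fun k : {k : Fin n // Ed k j.1} => comb F a2 b k.1) := by
    funext k
    unfold comb
    by_cases hk : k.1 ∉ F
    · rw [dif_pos hk, dif_pos hk]
    · rw [dif_neg hk, dif_neg hk]
      exact hcond j.1 j.2 k.1 k.2
  rw [hc]

lemma clampedExp_eq_const (hEd : ∀ i j : Fin n, Ed j i → j < i)
    (hπ : ∀ (i : Fin n) (s : St) (c : (j : {j : Fin n // Ed j i}) → A j.1), IsDist (π i s c))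
    (F : Finset (Fin n)) (s : St) (a : ∀ i, A i) (f : (∀ i, A i) → ℝ) (C : ℝ)
    (hf : ∀ b, f (comb F a b) = C) :
    clampedExp Ed π F s a f = C := by
  unfold clampedExp
  have h1 : ∑ b : (j : {j : Fin n // j ∉ F}) → A j.1,
      (∏ j : {j : Fin n // j ∉ F}, π j.1 s (fun k => comb F a b k.1) (b j)) = 1 := by
    refine sum_prod_one (Fintype.card {j : Fin n // j ∉ F}) rfl
      (fun j b => π j.1 s (fun k => comb F a b k.1)) ?_ ?_
    · intro j b b' hb
      have hc : (fun k : {k : Fin n // Ed k j.1} => comb F a b k.1) =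
          (fun k : {k : Fin n // Ed k j.1} => comb F a b' k.1) := by
        funext k
        unfold comb
        by_cases hk : k.1 ∉ F
        · rw [dif_pos hk, dif_pos hk]
          exact hb ⟨k.1, hk⟩ (Subtype.mk_lt_mk.mpr (hEd j.1 k.1 k.2))
        · rw [dif_neg hk, dif_neg hk]
      simp only [hc]
    · intro j b
      exact (hπ j.1 s _).2
  calc ∑ b : (j : {j : Fin n // j ∉ F}) → A j.1,
        (∏ j : {j : Fin n // j ∉ F}, π j.1 s (fun k => comb F a b k.1) (b j)) * f (comb F a b)
      = ∑ b : (j : {j : Fin n // j ∉ F}) → A j.1,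
        (∏ j : {j : Fin n // j ∉ F}, π j.1 s (fun k => comb F a b k.1) (b j)) * C := by
        apply Finset.sum_congr rfl
        intro b _
        rw [hf b]
    _ = C := by rw [← Finset.sum_mul, h1, one_mul]

lemma clampedExp_add (F : Finset (Fin n)) (s : St) (a : ∀ i, A i) (f g : (∀ i, A i) → ℝ) :
    clampedExp Ed π F s a (fun c => f c + g c) =
      clampedExp Ed π F s a f + clampedExp Ed π F s a g := by
  unfold clampedExp
  rw [← Finset.sum_add_distrib]
  apply Finset.sum_congr rfl
  intro b _
  ring

lemma clampedExp_extend (hEd : ∀ i j : Fin n, Ed j i → j < i)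
    (hπ : ∀ (i : Fin n) (s : St) (c : (j : {j : Fin n // Ed j i}) → A j.1), IsDist (π i s c))
    (F F' : Finset (Fin n)) (hFF : F ⊆ F') (s : St) (a : ∀ i, A i) (f : (∀ i, A i) → ℝ)
    (h1 : ∀ j : Fin n, j ∉ F' → ∀ k, Ed k j → k ∉ F' \ F)
    (h2 : ∀ c c' : ∀ i, A i, (∀ m, m ∉ F' \ F → c m = c' m) → f c = f c') :
    clampedExp Ed π F s a f = clampedExp Ed π F' s a f := by
  classical
  set e := mergeEquiv (A := A) F F' hFF with he
  -- the combined vector agrees with comb F' a b' outside F' \ F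
  have hC : ∀ (d : (j : {j : Fin n // j ∈ F' \ F}) → A j.1)
      (b' : (j : {j : Fin n // j ∉ F'}) → A j.1) (k : Fin n), k ∉ F' \ F →
      comb F a (e (d, b')) k = comb F' a b' k := by
    intro d b' k hk
    unfold comb
    by_cases hkF : k ∈ F
    · rw [dif_neg (not_not.mpr hkF), dif_neg (not_not.mpr (hFF hkF))]
    · have hkF' : k ∉ F' := fun h => hk (Finset.mem_sdiff.mpr ⟨h, hkF⟩)
      rw [dif_pos hkF, dif_pos hkF', he, mergeEquiv_apply_notMem F F' hFF d b' k hkF hkF']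
  -- define the per-(b') constant part
  set K : ((j : {j : Fin n // j ∉ F'}) → A j.1) → ℝ := fun b' =>
    (∏ j : {j : Fin n // j ∉ F'}, π j.1 s (fun k => comb F' a b' k.1) (b' j)) *
      f (comb F' a b') with hK
  have key : ∀ (d : (j : {j : Fin n // j ∈ F' \ F}) → A j.1)
      (b' : (j : {j : Fin n // j ∉ F'}) → A j.1),
      (∏ j : {j : Fin n // j ∉ F}, π j.1 s (fun k => comb F a (e (d, b')) k.1) (e (d, b') j)) *
        f (comb F a (e (d, b'))) =
      (∏ j : {j : Fin n // j ∈ F' \ F},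
          π j.1 s (fun k => comb F a (e (d, b')) k.1) (d j)) * K b' := by
    intro d b'
    rw [prod_split F F' hFF
      (fun j => π j.1 s (fun k => comb F a (e (d, b')) k.1) (e (d, b') j))]
    have hfact2 : (∏ j : {j : Fin n // j ∉ F'},
        π j.1 s (fun k => comb F a (e (d, b')) k.1)
          (e (d, b') ⟨j.1, fun h => j.2 (hFF h)⟩)) =
        ∏ j : {j : Fin n // j ∉ F'}, π j.1 s (fun k => comb F' a b' k.1) (b' j) := by
      apply Finset.prod_congr rfl
      intro j _
      have hcnd : (fun k : {k : Fin n // Ed k j.1} => comb F a (e (d, b')) k.1) =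
          (fun k : {k : Fin n // Ed k j.1} => comb F' a b' k.1) := by
        funext k
        exact hC d b' k.1 (h1 j.1 j.2 k.1 k.2)
      rw [hcnd, mergeEquiv_apply_notMem F F' hFF d b' j.1 (fun h => j.2 (hFF h)) j.2]
    have hfact1 : (∏ j : {j : Fin n // j ∈ F' \ F},
        π j.1 s (fun k => comb F a (e (d, b')) k.1)
          (e (d, b') ⟨j.1, (Finset.mem_sdiff.mp j.2).2⟩)) =
        ∏ j : {j : Fin n // j ∈ F' \ F},
          π j.1 s (fun k => comb F a (e (d, b')) k.1) (d j) := by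
      apply Finset.prod_congr rfl
      intro j _
      rw [mergeEquiv_apply_mem F F' hFF d b' j.1 (Finset.mem_sdiff.mp j.2).2
        (Finset.mem_sdiff.mp j.2).1]
    have hfterm : f (comb F a (e (d, b'))) = f (comb F' a b') :=
      h2 _ _ (fun m hm => hC d b' m hm)
    rw [hfact1, hfact2, hfterm, hK, mul_assoc]
  have hsum1 : ∀ (b' : (j : {j : Fin n // j ∉ F'}) → A j.1),
      ∑ d : (j : {j : Fin n // j ∈ F' \ F}) → A j.1,
        (∏ j : {j : Fin n // j ∈ F' \ F},
          π j.1 s (fun k => comb F a (e (d, b')) k.1) (d j)) = 1 := by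
    intro b'
    refine sum_prod_one (Fintype.card {j : Fin n // j ∈ F' \ F}) rfl
      (fun j d => π j.1 s (fun k => comb F a (e (d, b')) k.1)) ?_ ?_
    · intro j d d' hd
      have hcnd : (fun k : {k : Fin n // Ed k j.1} => comb F a (e (d, b')) k.1) =
          (fun k : {k : Fin n // Ed k j.1} => comb F a (e (d', b')) k.1) := by
        funext k
        have hlt : k.1 < j.1 := hEd j.1 k.1 k.2
        unfold comb
        by_cases hkF : k.1 ∉ F
        · rw [dif_pos hkF, dif_pos hkF]
          by_cases hkF' : k.1 ∈ F'
          · rw [he, mergeEquiv_apply_mem F F' hFF d b' k.1 hkF hkF',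
              mergeEquiv_apply_mem F F' hFF d' b' k.1 hkF hkF']
            exact hd ⟨k.1, Finset.mem_sdiff.mpr ⟨hkF', hkF⟩⟩ (Subtype.mk_lt_mk.mpr hlt)
          · rw [he, mergeEquiv_apply_notMem F F' hFF d b' k.1 hkF hkF',
              mergeEquiv_apply_notMem F F' hFF d' b' k.1 hkF hkF']
        · rw [dif_neg hkF, dif_neg hkF]
      simp only [hcnd]
    · intro j d
      exact (hπ j.1 s _).2
  calc clampedExp Ed π F s a f
      = ∑ p : ((j : {j : Fin n // j ∈ F' \ F}) → A j.1) ×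
          ((j : {j : Fin n // j ∉ F'}) → A j.1),
          (∏ j : {j : Fin n // j ∉ F},
            π j.1 s (fun k => comb F a (e p) k.1) (e p j)) * f (comb F a (e p)) :=
        (Equiv.sum_comp e (fun b => (∏ j : {j : Fin n // j ∉ F},
            π j.1 s (fun k => comb F a b k.1) (b j)) * f (comb F a b))).symm
    _ = ∑ d : (j : {j : Fin n // j ∈ F' \ F}) → A j.1,
          ∑ b' : (j : {j : Fin n // j ∉ F'}) → A j.1,
          (∏ j : {j : Fin n // j ∉ F},
            π j.1 s (fun k => comb F a (e (d, b')) k.1) (e (d, b') j)) *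
            f (comb F a (e (d, b'))) := Fintype.sum_prod_type _
    _ = ∑ d : (j : {j : Fin n // j ∈ F' \ F}) → A j.1,
          ∑ b' : (j : {j : Fin n // j ∉ F'}) → A j.1,
          (∏ j : {j : Fin n // j ∈ F' \ F},
            π j.1 s (fun k => comb F a (e (d, b')) k.1) (d j)) * K b' := by
        apply Finset.sum_congr rfl; intro d _
        apply Finset.sum_congr rfl; intro b' _
        exact key d b'
    _ = ∑ b' : (j : {j : Fin n // j ∉ F'}) → A j.1,
          ∑ d : (j : {j : Fin n // j ∈ F' \ F}) → A j.1,
          (∏ j : {j : Fin n // j ∈ F' \ F},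
            π j.1 s (fun k => comb F a (e (d, b')) k.1) (d j)) * K b' := Finset.sum_comm
    _ = ∑ b' : (j : {j : Fin n // j ∉ F'}) → A j.1, K b' := by
        apply Finset.sum_congr rfl; intro b' _
        rw [← Finset.sum_mul, hsum1 b', one_mul]
    _ = clampedExp Ed π F' s a f := rfl


end

/-- let `G_c` be a CG of `Q`, and let `π` be a stochastic
action-dependent joint policy associated with an ADG (edge relation `Ed`, topologically
sorted) satisfying `N_d(k) = N_c(k^{[+]})` for all `k`. Fix `i`, `s`, and clamped
values `a'` (only the coordinates `j < i` of `a'` matter). Then the distributions `p`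
on `A i` maximizing
`F(p) = E_{a_i∼p, π_{-N_d[i]}}[Q(s, a'_{N_d(i)}, a_i, a_{-N_d[i]})]`
are exactly the distributions maximizing
`G(p) = E_{a_i∼p, π_{i^+}}[Q(s, a'_{i^-}, a_i, a_{i^+})]`. -/
theorem stmt4 {n : ℕ} {St : Type*} {A : Fin n → Type*}
    [∀ i, Fintype (A i)] [∀ i, Nonempty (A i)]
    (Gc : SimpleGraph (Fin n)) (Q : St → (∀ i, A i) → ℝ) (hCG : IsCG Gc Q)
    (Ed : Fin n → Fin n → Prop) [DecidableRel Ed]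
    (hEd : ∀ i j : Fin n, Ed j i → j < i)
    (hNd : ∀ k : Fin n, {j : Fin n | Ed j k} = ncSet Gc {j : Fin n | k ≤ j})
    (π : (i : Fin n) → St → ((j : {j : Fin n // Ed j i}) → A j.1) → A i → ℝ)
    (hπ : ∀ (i : Fin n) (s : St) (c : (j : {j : Fin n // Ed j i}) → A j.1),
        IsDist (π i s c))
    (i : Fin n) (s : St) (a' : ∀ j, A j) :
    {p : A i → ℝ | IsDist p ∧ ∀ q : A i → ℝ, IsDist q →
        (∑ ai, q ai * clampedExp Ed π (Finset.univ.filter fun j => Ed j i ∨ j = i) s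
            (Function.update a' i ai) (Q s)) ≤
        (∑ ai, p ai * clampedExp Ed π (Finset.univ.filter fun j => Ed j i ∨ j = i) s
            (Function.update a' i ai) (Q s))} =
    {p : A i → ℝ | IsDist p ∧ ∀ q : A i → ℝ, IsDist q →
        (∑ ai, q ai * clampedExp Ed π (Finset.univ.filter fun j => j ≤ i) s
            (Function.update a' i ai) (Q s)) ≤
        (∑ ai, p ai * clampedExp Ed π (Finset.univ.filter fun j => j ≤ i) s
            (Function.update a' i ai) (Q s))} := by
  classical
  obtain ⟨q, hq0, hQ⟩ := hCG
  -- edge facts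
  have EdIff : ∀ k j : Fin n, Ed j k ↔ ((∃ m, k ≤ m ∧ Gc.Adj m j) ∧ ¬ k ≤ j) := by
    intro k j
    have h := Set.ext_iff.mp (hNd k) j
    simpa [ncSet, Set.mem_diff, Set.mem_iUnion, SimpleGraph.mem_neighborSet] using h
  have fact1 : ∀ k l : Fin n, k < l → Gc.Adj k l → i ≤ l → k < i → Ed k i :=
    fun k l _ hadj hil hki => (EdIff i k).mpr ⟨⟨l, hil, hadj.symm⟩, not_le.mpr hki⟩
  have fact2 : ∀ j k : Fin n, i < j → Ed k j → k < i → Ed k i := by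
    intro j k hij hkj hki
    obtain ⟨⟨m, hjm, hadj⟩, -⟩ := (EdIff j k).mp hkj
    exact (EdIff i k).mpr ⟨⟨m, le_trans hij.le hjm, hadj⟩, not_le.mpr hki⟩
  set F1 : Finset (Fin n) := Finset.univ.filter (fun j => Ed j i ∨ j = i) with hF1
  set F2 : Finset (Fin n) := Finset.univ.filter (fun j : Fin n => j ≤ i) with hF2
  set F1' : Finset (Fin n) := Finset.univ.filter (fun j : Fin n => Ed j i ∨ i ≤ j) with hF1'
  have mF1 : ∀ j : Fin n, j ∈ F1 ↔ (Ed j i ∨ j = i) := by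
    intro j; simp [hF1]
  have mF2 : ∀ j : Fin n, j ∈ F2 ↔ j ≤ i := by
    intro j; simp [hF2]
  have mF1' : ∀ j : Fin n, j ∈ F1' ↔ (Ed j i ∨ i ≤ j) := by
    intro j; simp [hF1']
  set Q1 : (∀ j, A j) → ℝ :=
    fun c => ∑ k, ∑ l, if i ≤ l then q k l s (c k) (c l) else 0 with hQ1
  set Q2 : (∀ j, A j) → ℝ :=
    fun c => ∑ k, ∑ l, if i ≤ l then 0 else q k l s (c k) (c l) with hQ2
  have hQsplit : (Q s) = fun c => Q1 c + Q2 c := by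
    funext c
    rw [hQ s c]
    simp only [hQ1, hQ2]
    rw [← Finset.sum_add_distrib]
    apply Finset.sum_congr rfl; intro k _
    rw [← Finset.sum_add_distrib]
    apply Finset.sum_congr rfl; intro l _
    by_cases h : i ≤ l <;> simp [h]
  have hQ1dep : ∀ c c' : ∀ j, A j, (∀ m, (Ed m i ∨ i ≤ m) → c m = c' m) → Q1 c = Q1 c' := by
    intro c c' h
    simp only [hQ1]
    apply Finset.sum_congr rfl; intro k _
    apply Finset.sum_congr rfl; intro l _
    by_cases hl : i ≤ l
    · rw [if_pos hl, if_pos hl, h l (Or.inr hl)]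
      by_cases hk : k < l ∧ Gc.Adj k l
      · by_cases hki : i ≤ k
        · rw [h k (Or.inr hki)]
        · rw [h k (Or.inl (fact1 k l hk.1 hk.2 hl (not_le.mp hki)))]
      · rw [hq0 k l hk s _ _, hq0 k l hk s _ _]
    · rw [if_neg hl, if_neg hl]
  have hQ2dep : ∀ c c' : ∀ j, A j, (∀ m, m < i → c m = c' m) → Q2 c = Q2 c' := by
    intro c c' h
    simp only [hQ2]
    apply Finset.sum_congr rfl; intro k _
    apply Finset.sum_congr rfl; intro l _
    by_cases hl : i ≤ l
    · rw [if_pos hl, if_pos hl]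
    · rw [if_neg hl, if_neg hl, h l (not_le.mp hl)]
      by_cases hk : k < l ∧ Gc.Adj k l
      · rw [h k (lt_trans hk.1 (not_le.mp hl))]
      · rw [hq0 k l hk s _ _, hq0 k l hk s _ _]
  have hsub12 : F1 ⊆ F2 := by
    intro j hj
    rcases (mF1 j).mp hj with h | h
    · exact (mF2 j).mpr (hEd i j h).le
    · exact (mF2 j).mpr h.le
  have hsub11' : F1 ⊆ F1' := by
    intro j hj
    rcases (mF1 j).mp hj with h | h
    · exact (mF1' j).mpr (Or.inl h)
    · exact (mF1' j).mpr (Or.inr h.ge)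
  have keydiff : ∀ ai : A i,
      clampedExp Ed π F1 s (Function.update a' i ai) (Q s) =
      clampedExp Ed π F2 s (Function.update a' i ai) (Q s) +
        (clampedExp Ed π F1' s a' Q2 - Q2 a') := by
    intro ai
    set a : ∀ j, A j := Function.update a' i ai with ha
    have hs1 : clampedExp Ed π F1 s a (Q s) =
        clampedExp Ed π F1 s a Q1 + clampedExp Ed π F1 s a Q2 := by
      rw [hQsplit, clampedExp_add]
    have hs2 : clampedExp Ed π F2 s a (Q s) =
        clampedExp Ed π F2 s a Q1 + clampedExp Ed π F2 s a Q2 := by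
      rw [hQsplit, clampedExp_add]
    have e21 : clampedExp Ed π F1 s a Q1 = clampedExp Ed π F2 s a Q1 := by
      apply clampedExp_extend Ed π hEd hπ F1 F2 hsub12 s a Q1
      · intro j hj k hkj hmem
        rw [Finset.mem_sdiff] at hmem
        have hij : i < j := not_le.mp (fun h => hj ((mF2 j).mpr h))
        have hki : k < i := by
          have hle : k ≤ i := (mF2 k).mp hmem.1
          rcases lt_or_eq_of_le hle with h | h
          · exact h
          · exact absurd ((mF1 k).mpr (Or.inr h)) hmem.2
        exact hmem.2 ((mF1 k).mpr (Or.inl (fact2 j k hij hkj hki)))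
      · intro c c' h
        apply hQ1dep
        intro m hm
        apply h
        rw [Finset.mem_sdiff]
        rintro ⟨hm2, hm1⟩
        rcases hm with h' | h'
        · exact hm1 ((mF1 m).mpr (Or.inl h'))
        · exact hm1 ((mF1 m).mpr (Or.inr (le_antisymm ((mF2 m).mp hm2) h')))
    have e31 : clampedExp Ed π F1 s a Q2 = clampedExp Ed π F1' s a Q2 := by
      apply clampedExp_extend Ed π hEd hπ F1 F1' hsub11' s a Q2
      · intro j hj k hkj hmem
        rw [Finset.mem_sdiff] at hmem
        have hji : j < i := by
          by_contra h
          exact hj ((mF1' j).mpr (Or.inr (not_lt.mp h)))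
        have hki : k < i := lt_trans (hEd j k hkj) hji
        rcases (mF1' k).mp hmem.1 with h | h
        · exact hmem.2 ((mF1 k).mpr (Or.inl h))
        · exact absurd h (not_le.mpr hki)
      · intro c c' h
        apply hQ2dep
        intro m hm
        apply h
        rw [Finset.mem_sdiff]
        rintro ⟨hm1', hm1⟩
        rcases (mF1' m).mp hm1' with h' | h'
        · exact hm1 ((mF1 m).mpr (Or.inl h'))
        · exact absurd h' (not_le.mpr hm)
    have e32 : clampedExp Ed π F1' s a Q2 = clampedExp Ed π F1' s a' Q2 := by
      apply clampedExp_congr' Ed π F1' s a a' Q2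
      · intro j hj k hkj
        have hji : j < i := by
          by_contra h
          exact hj ((mF1' j).mpr (Or.inr (not_lt.mp h)))
        have hki : k ≠ i := ne_of_lt (lt_trans (hEd j k hkj) hji)
        rw [ha]
        exact Function.update_of_ne hki ai a'
      · intro b
        apply hQ2dep
        intro m hm
        unfold comb
        by_cases hmF : m ∉ F1'
        · rw [dif_pos hmF, dif_pos hmF]
        · rw [dif_neg hmF, dif_neg hmF, ha]
          exact Function.update_of_ne (ne_of_lt hm) ai a'
    have e4 : clampedExp Ed π F2 s a Q2 = Q2 a' := by
      apply clampedExp_eq_const Ed π hEd hπ F2 s a Q2 (Q2 a')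
      intro b
      apply hQ2dep
      intro m hm
      have hmF : m ∈ F2 := (mF2 m).mpr hm.le
      unfold comb
      rw [dif_neg (not_not.mpr hmF), ha]
      exact Function.update_of_ne (ne_of_lt hm) ai a'
    rw [hs1, hs2, e21, e31, e32, e4]
    ring
  have hsumeq : ∀ r : A i → ℝ, IsDist r →
      (∑ ai, r ai * clampedExp Ed π F1 s (Function.update a' i ai) (Q s)) =
      (∑ ai, r ai * clampedExp Ed π F2 s (Function.update a' i ai) (Q s)) +
        (clampedExp Ed π F1' s a' Q2 - Q2 a') := by
    intro r hr
    rw [Finset.sum_congr rfl (fun ai _ => by rw [keydiff ai])]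
    simp only [mul_add]
    rw [Finset.sum_add_distrib, ← Finset.sum_mul, hr.2, one_mul]
  ext p
  simp only [Set.mem_setOf_eq]
  constructor
  · rintro ⟨hp, hmax⟩
    refine ⟨hp, fun r hr => ?_⟩
    have h := hmax r hr
    rw [hsumeq r hr, hsumeq p hp] at h
    linarith
  · rintro ⟨hp, hmax⟩
    refine ⟨hp, fun r hr => ?_⟩
    have h := hmax r hr
    rw [hsumeq r hr, hsumeq p hp]
    linarith
end

section
/- Let π be an independent joint policy of a finite Markov game. The following two conditions are equivalent: (ii) for every agent i, every policy π'_i : S → Δ(A_i) of agent i, and every s ∈ S, V^{(π'_i, π_{-i})}(s) ≤ V^π(s); and (iii) for every agent i, every π'_i : S → Δ(A_i), and every s ∈ S, Σ_{a∈A} π'_i(a_i|s) ∏_{j≠i} π_j(a_j|s) · Q^{V^π}(s, a) ≤ V^π(s). (Since π_i itself attains equality in both conditions, (ii) and (iii) are the Nash-equilibrium and agent-by-agent-optimality conditions of the paper stated in upper-bound form.) -/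
/-! (iii) ⇒ (ii): a deviation value is the fixed point of a monotone γ-contraction for which
`V^π` is a supersolution, so it lies below `V^π`. (ii) ⇒ (iii): if switching agent `i` to `π'_i`
raised the one-step value at a state `s`, then `V^π` would be a subsolution, strict at `s`, for the
policy that deviates to `π'_i` at `s` only; the value of that policy would then exceed `V^π(s)`. -/

open Finset Function

section Bellman

variable {S α : Type*} [Fintype α]

def IsStochastic (w : S → α → ℝ) : Prop :=
  ∀ s, (∀ a, 0 ≤ w s a) ∧ ∑ a, w s a = 1

theorem IsStochastic.update [DecidableEq S] {w : S → α → ℝ} (hw : IsStochastic w) {s : S}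
    {v : α → ℝ} (hv : (∀ a, 0 ≤ v a) ∧ ∑ a, v a = 1) : IsStochastic (update w s v) :=
  (forall_update_iff w fun _ v => (∀ a, 0 ≤ v a) ∧ ∑ a, v a = 1).2 ⟨hv, fun t _ => hw t⟩

variable [Fintype S]

def bellman (P : S → α → S → ℝ) (r : S → α → ℝ) (γ : ℝ) (w : S → α → ℝ) (V : S → ℝ)
    (s : S) : ℝ :=
  ∑ a, w s a * (r s a + γ * ∑ s', P s a s' * V s')

variable {P : S → α → S → ℝ} {r : S → α → ℝ} {γ : ℝ} {w : S → α → ℝ}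

theorem bellman_le_add (hP0 : ∀ s a s', 0 ≤ P s a s') (hP1 : ∀ s a, ∑ s', P s a s' = 1)
    (hγ0 : 0 ≤ γ) (hw : IsStochastic w) {f g : S → ℝ} {M : ℝ} (h : ∀ t, f t ≤ g t + M)
    (s : S) : bellman P r γ w f s ≤ bellman P r γ w g s + γ * M := by
  have hP : ∀ a, ∑ s', P s a s' * (g s' + M) = ∑ s', P s a s' * g s' + M := fun a => by
    simp only [mul_add, sum_add_distrib, ← sum_mul, hP1, one_mul]
  calc bellman P r γ w f s
      ≤ ∑ a, w s a * (r s a + γ * ∑ s', P s a s' * (g s' + M)) := by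
        unfold bellman
        gcongr with a _ s' _
        · exact (hw s).1 a
        · exact hP0 s a s'
        · exact h s'
    _ = ∑ a, (w s a * (r s a + γ * ∑ s', P s a s' * g s') + w s a * (γ * M)) :=
        sum_congr rfl fun a _ => by rw [hP]; ring
    _ = bellman P r γ w g s + γ * M := by
        rw [sum_add_distrib, ← sum_mul, (hw s).2, one_mul]; rfl

theorem bellman_mono (hP0 : ∀ s a s', 0 ≤ P s a s') (hP1 : ∀ s a, ∑ s', P s a s' = 1)
    (hγ0 : 0 ≤ γ) (hw : IsStochastic w) {f g : S → ℝ} (h : ∀ t, f t ≤ g t) (s : S) :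
    bellman P r γ w f s ≤ bellman P r γ w g s := by
  simpa using bellman_le_add hP0 hP1 hγ0 hw (M := 0) (fun t => by simpa using h t) s

theorem bellman_contractingWith (hP0 : ∀ s a s', 0 ≤ P s a s')
    (hP1 : ∀ s a, ∑ s', P s a s' = 1) (hγ0 : 0 ≤ γ) (hγ1 : γ < 1) (hw : IsStochastic w) :
    ContractingWith ⟨γ, hγ0⟩ (bellman P r γ w) := by
  refine ⟨hγ1, LipschitzWith.of_dist_le_mul fun f g => ?_⟩
  refine (dist_pi_le_iff (mul_nonneg hγ0 dist_nonneg)).2 fun s => ?_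
  have hfg : ∀ t, |f t - g t| ≤ dist f g := fun t => by
    simpa [Real.dist_eq] using dist_le_pi_dist f g t
  have hf := bellman_le_add hP0 hP1 hγ0 hw (r := r) (f := f) (g := g) (M := dist f g)
    (fun t => by linarith [le_abs_self (f t - g t), hfg t]) s
  have hg := bellman_le_add hP0 hP1 hγ0 hw (r := r) (f := g) (g := f) (M := dist f g)
    (fun t => by linarith [neg_abs_le (f t - g t), hfg t]) s
  rw [Real.dist_eq, abs_sub_le_iff]
  constructor <;> linarith

theorem le_of_le_bellman_of_bellman_le (hP0 : ∀ s a s', 0 ≤ P s a s')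
    (hP1 : ∀ s a, ∑ s', P s a s' = 1) (hγ0 : 0 ≤ γ) (hγ1 : γ < 1) (hw : IsStochastic w)
    {f g : S → ℝ} (hf : ∀ t, f t ≤ bellman P r γ w f t) (hg : ∀ t, bellman P r γ w g t ≤ g t)
    (s : S) : f s ≤ g s := by
  obtain ⟨s₀, -, hs₀⟩ := exists_max_image univ (fun t => f t - g t) ⟨s, mem_univ s⟩
  have hM : ∀ t, f t ≤ g t + (f s₀ - g s₀) := fun t => by linarith [hs₀ t (mem_univ t)]
  have hs₀' := (hf s₀).trans (bellman_le_add hP0 hP1 hγ0 hw hM s₀)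
  have hM0 : f s₀ - g s₀ ≤ 0 := by nlinarith [hg s₀]
  linarith [hM s]

theorem lt_of_le_bellman_of_lt (hP0 : ∀ s a s', 0 ≤ P s a s')
    (hP1 : ∀ s a, ∑ s', P s a s' = 1) (hγ0 : 0 ≤ γ) (hγ1 : γ < 1) (hw : IsStochastic w)
    {f g : S → ℝ} (hf : ∀ t, f t ≤ bellman P r γ w f t) (hg : ∀ t, g t = bellman P r γ w g t)
    {s : S} (hs : f s < bellman P r γ w f s) : f s < g s :=
  calc f s < bellman P r γ w f s := hs
    _ ≤ bellman P r γ w g s := bellman_mono hP0 hP1 hγ0 hw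
        (le_of_le_bellman_of_bellman_le hP0 hP1 hγ0 hγ1 hw hf fun t => (hg t).ge) s
    _ = g s := (hg s).symm

end Bellman

section JointPolicy

variable {n : ℕ} {S : Type*} {A : Fin n → Type*}

def jointPolicy (π : (i : Fin n) → S → A i → ℝ) (s : S) (a : ∀ i, A i) : ℝ :=
  ∏ i, π i s (a i)

theorem isStochastic_jointPolicy [∀ i, Fintype (A i)] {π : (i : Fin n) → S → A i → ℝ}
    (hπ : ∀ i, IsStochastic (π i)) : IsStochastic (jointPolicy π) := fun s =>
  ⟨fun a => prod_nonneg fun i _ => (hπ i s).1 (a i), by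
    rw [show ∑ a, jointPolicy π s a = ∑ a : ∀ i, A i, ∏ i, π i s (a i) from rfl,
      ← Fintype.prod_sum]
    exact prod_eq_one fun i _ => (hπ i s).2⟩

theorem jointPolicy_update (π : (i : Fin n) → S → A i → ℝ) (i : Fin n) (σ : S → A i → ℝ)
    (s : S) (a : ∀ i, A i) :
    jointPolicy (update π i σ) s a = σ s (a i) * ∏ j ∈ univ.erase i, π j s (a j) := by
  rw [jointPolicy, ← mul_prod_erase univ _ (mem_univ i), update_self]
  exact congrArg _ (prod_congr rfl fun j hj => by rw [update_of_ne (ne_of_mem_erase hj)])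

theorem jointPolicy_update_congr (π : (i : Fin n) → S → A i → ℝ) {i : Fin n}
    {σ σ' : S → A i → ℝ} {s : S} (h : σ s = σ' s) :
    jointPolicy (update π i σ) s = jointPolicy (update π i σ') s := by
  funext a
  rw [jointPolicy_update, jointPolicy_update, h]

end JointPolicy

theorem stmt8_general {n : ℕ} {St : Type*} [Fintype St] {A : Fin n → Type*}
    [∀ i, Fintype (A i)]
    (P : St → (∀ i, A i) → St → ℝ) (r : St → (∀ i, A i) → ℝ) (γ : ℝ)
    (hP0 : ∀ s a s', 0 ≤ P s a s') (hP1 : ∀ s a, ∑ s', P s a s' = 1)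
    (hγ0 : 0 ≤ γ) (hγ1 : γ < 1)
    (π : (i : Fin n) → St → A i → ℝ)
    (hπ : ∀ i s, (∀ ai, 0 ≤ π i s ai) ∧ ∑ ai, π i s ai = 1)
    (Vπ : St → ℝ)
    (hVπ : ∀ s, Vπ s = ∑ a : ∀ i, A i, (∏ i, π i s (a i)) *
        (r s a + γ * ∑ s', P s a s' * Vπ s')) :
    ((∀ (i : Fin n) (π' : St → A i → ℝ),
        (∀ s, (∀ ai, 0 ≤ π' s ai) ∧ ∑ ai, π' s ai = 1) →
        ∀ V' : St → ℝ,
          (∀ s, V' s = ∑ a : ∀ i, A i,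
              (π' s (a i) * ∏ j ∈ Finset.univ.erase i, π j s (a j)) *
              (r s a + γ * ∑ s', P s a s' * V' s')) →
          ∀ s, V' s ≤ Vπ s)
      ↔
      (∀ (i : Fin n) (π' : St → A i → ℝ),
        (∀ s, (∀ ai, 0 ≤ π' s ai) ∧ ∑ ai, π' s ai = 1) →
        ∀ s, (∑ a : ∀ i, A i,
            (π' s (a i) * ∏ j ∈ Finset.univ.erase i, π j s (a j)) *
            (r s a + γ * ∑ s', P s a s' * Vπ s')) ≤ Vπ s)) := by
  classical
  have hdev : ∀ i σ, IsStochastic σ → IsStochastic (jointPolicy (update π i σ)) :=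
    fun i σ hσ => isStochastic_jointPolicy <| (forall_update_iff π fun j => IsStochastic).2
      ⟨hσ, fun j _ => hπ j⟩
  simp only [← jointPolicy_update]
  constructor
  · intro hii i π' hπ' s
    by_contra! hlt
    set σ := update (π i) s (π' s)
    have hσ : IsStochastic σ := IsStochastic.update (hπ i) (hπ' s)
    obtain ⟨V', hV'⟩ : ∃ V', ∀ t, V' t = bellman P r γ (jointPolicy (update π i σ)) V' t :=
      let hT := bellman_contractingWith (r := r) hP0 hP1 hγ0 hγ1 (hdev i σ hσ)
      ⟨_, congrFun hT.fixedPoint_isFixedPt.symm⟩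
    have hσs : Vπ s < bellman P r γ (jointPolicy (update π i σ)) Vπ s := by
      rwa [bellman, jointPolicy_update_congr π (update_self s (π' s) (π i))]
    have hsub : ∀ t, Vπ t ≤ bellman P r γ (jointPolicy (update π i σ)) Vπ t := fun t => by
      by_cases hts : t = s
      · exact hts ▸ hσs.le
      · rw [bellman, jointPolicy_update_congr π (update_of_ne hts _ _), update_eq_self]
        exact (hVπ t).le
    have hV's : Vπ s < V' s := lt_of_le_bellman_of_lt hP0 hP1 hγ0 hγ1 (hdev i σ hσ) hsub
      hV' hσs
    linarith [hii i σ hσ V' hV' s]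
  · intro hiii i π' hπ' V' hV' s
    exact le_of_le_bellman_of_bellman_le hP0 hP1 hγ0 hγ1 (hdev i π' hπ') (fun t => (hV' t).le)
      (hiii i π' hπ') s

/-- equivalence of the Nash-equilibrium and agent-by-agent-optimality
conditions. In a finite Markov game, let `π` be an independent joint policy (each
`π i s` a distribution on `A i`), with value function `Vπ` (the unique fixed point of
`T_π`, expressed as the fixed-point equation `hVπ`). Deviating values
`V^{(π'_i, π_{-i})}` are encoded as fixed points of the corresponding Bellman operator.
Then condition (ii) `V^{(π'_i, π_{-i})}(s) ≤ V^π(s)` for all `i, π'_i, s` is equivalent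
to condition (iii) `E_{π'_i, π_{-i}}[Q^{V^π}(s,a)] ≤ V^π(s)` for all `i, π'_i, s`. -/
theorem stmt8 {n : ℕ} {St : Type*} [Fintype St] {A : Fin n → Type*}
    [∀ i, Fintype (A i)] [∀ i, Nonempty (A i)]
    (P : St → (∀ i, A i) → St → ℝ) (r : St → (∀ i, A i) → ℝ) (γ : ℝ)
    (hP0 : ∀ s a s', 0 ≤ P s a s') (hP1 : ∀ s a, ∑ s', P s a s' = 1)
    (hγ0 : 0 ≤ γ) (hγ1 : γ < 1)
    (π : (i : Fin n) → St → A i → ℝ)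
    (hπ : ∀ i s, (∀ ai, 0 ≤ π i s ai) ∧ ∑ ai, π i s ai = 1)
    (Vπ : St → ℝ)
    (hVπ : ∀ s, Vπ s = ∑ a : ∀ i, A i, (∏ i, π i s (a i)) *
        (r s a + γ * ∑ s', P s a s' * Vπ s')) :
    ((∀ (i : Fin n) (π' : St → A i → ℝ),
        (∀ s, (∀ ai, 0 ≤ π' s ai) ∧ ∑ ai, π' s ai = 1) →
        ∀ V' : St → ℝ,
          (∀ s, V' s = ∑ a : ∀ i, A i,
              (π' s (a i) * ∏ j ∈ Finset.univ.erase i, π j s (a j)) *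
              (r s a + γ * ∑ s', P s a s' * V' s')) →
          ∀ s, V' s ≤ Vπ s)
      ↔
      (∀ (i : Fin n) (π' : St → A i → ℝ),
        (∀ s, (∀ ai, 0 ≤ π' s ai) ∧ ∑ ai, π' s ai = 1) →
        ∀ s, (∑ a : ∀ i, A i,
            (π' s (a i) * ∏ j ∈ Finset.univ.erase i, π j s (a j)) *
            (r s a + γ * ∑ s', P s a s' * Vπ s')) ≤ Vπ s)) :=
  stmt8_general P r γ hP0 hP1 hγ0 hγ1 π hπ Vπ hVπ
end

section
/- Let π be an independent joint policy of a finite Markov game and let μ : S → ℝ satisfy μ(s) > 0 for all s ∈ S. The following two conditions are equivalent: (i) for every agent i and every policy π'_i : S → Δ(A_i), Σ_{s∈S} μ(s) V^{(π'_i, π_{-i})}(s) ≤ Σ_{s∈S} μ(s) V^π(s); and (ii) for every agent i, every π'_i : S → Δ(A_i), and every s ∈ S, V^{(π'_i, π_{-i})}(s) ≤ V^π(s). -/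
lemma bellman_exists {St : Type*} [Fintype St] {Ac : Type*} [Fintype Ac]
    (P : St → Ac → St → ℝ) (r : St → Ac → ℝ) (γ : ℝ)
    (hP0 : ∀ s a s', 0 ≤ P s a s') (hP1 : ∀ s a, ∑ s', P s a s' = 1)
    (hγ0 : 0 ≤ γ) (hγ1 : γ < 1)
    (p : St → Ac → ℝ) (hp0 : ∀ s a, 0 ≤ p s a) (hp1 : ∀ s, ∑ a, p s a = 1) :
    ∃ V : St → ℝ,
      (∀ s, V s = ∑ a, p s a * (r s a + γ * ∑ s', P s a s' * V s')) ∧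
      ∀ W : St → ℝ,
        (∀ s, W s ≤ ∑ a, p s a * (r s a + γ * ∑ s', P s a s' * W s')) →
        ∀ s, W s ≤ V s := by
  set F : (St → ℝ) → (St → ℝ) :=
    fun V s => ∑ a, p s a * (r s a + γ * ∑ s', P s a s' * V s') with hF
  have hmono : ∀ V W : St → ℝ, (∀ s, V s ≤ W s) → ∀ s, F V s ≤ F W s := by
    intro V W h s
    apply Finset.sum_le_sum
    intro a _
    gcongr
    · exact hp0 s a
    · exact hP0 s a _
    · exact h _
  have hlip : LipschitzWith ⟨γ, hγ0⟩ F := by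
    apply LipschitzWith.of_dist_le_mul
    intro V W
    rw [dist_pi_le_iff (by positivity)]
    intro s
    rw [Real.dist_eq]
    have heq : F V s - F W s = ∑ a, p s a * γ * ∑ s', P s a s' * (V s' - W s') := by
      simp only [hF, ← Finset.sum_sub_distrib]
      apply Finset.sum_congr rfl
      intro a _
      have hZ : ∑ s', P s a s' * (V s' - W s')
          = (∑ s', P s a s' * V s') - ∑ s', P s a s' * W s' := by
        rw [← Finset.sum_sub_distrib]
        apply Finset.sum_congr rfl
        intros; ring
      rw [hZ]; ring
    rw [heq]
    calc |∑ a, p s a * γ * ∑ s', P s a s' * (V s' - W s')|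
        ≤ ∑ a, |p s a * γ * ∑ s', P s a s' * (V s' - W s')| :=
          Finset.abs_sum_le_sum_abs _ _
      _ ≤ ∑ a : Ac, p s a * γ * dist V W := by
          apply Finset.sum_le_sum
          intro a _
          rw [abs_mul, abs_of_nonneg (mul_nonneg (hp0 s a) hγ0)]
          apply mul_le_mul_of_nonneg_left _ (mul_nonneg (hp0 s a) hγ0)
          calc |∑ s', P s a s' * (V s' - W s')|
              ≤ ∑ s', |P s a s' * (V s' - W s')| := Finset.abs_sum_le_sum_abs _ _
            _ ≤ ∑ s', P s a s' * dist V W := by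
                apply Finset.sum_le_sum
                intro s' _
                rw [abs_mul, abs_of_nonneg (hP0 s a s')]
                apply mul_le_mul_of_nonneg_left _ (hP0 s a s')
                rw [← Real.dist_eq]
                exact dist_le_pi_dist V W s'
            _ = dist V W := by rw [← Finset.sum_mul, hP1, one_mul]
      _ = γ * dist V W := by
          rw [← Finset.sum_mul, ← Finset.sum_mul, hp1, one_mul]
  have hcf : ContractingWith ⟨γ, hγ0⟩ F := ⟨by exact_mod_cast hγ1, hlip⟩
  refine ⟨hcf.fixedPoint F, ?_, ?_⟩
  · intro s
    conv_lhs => rw [← hcf.fixedPoint_isFixedPt]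
  · intro W hW
    have hiter : ∀ m, ∀ t, W t ≤ F^[m] W t := by
      intro m
      induction m with
      | zero => simp
      | succ k ih =>
        intro t
        calc W t ≤ F W t := hW t
          _ ≤ F (F^[k] W) t := hmono _ _ ih t
          _ = F^[k+1] W t := by rw [Function.iterate_succ_apply']
    intro s
    have htend := hcf.tendsto_iterate_fixedPoint W
    have hts : Filter.Tendsto (fun m => F^[m] W s) Filter.atTop
        (nhds (hcf.fixedPoint F s)) := by
      exact (tendsto_pi_nhds.mp htend) s
    exact ge_of_tendsto' hts (fun m => hiter m s)

lemma dev_sum_one {n : ℕ} {A : Fin n → Type*} [∀ i, Fintype (A i)] (i : Fin n)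
    (q : A i → ℝ) (g : (j : Fin n) → A j → ℝ)
    (hq : ∑ ai, q ai = 1) (hg : ∀ j, ∑ aj, g j aj = 1) :
    ∑ a : ∀ j, A j, q (a i) * ∏ j ∈ Finset.univ.erase i, g j (a j) = 1 := by
  classical
  set f : ∀ j, A j → ℝ := Function.update g i q with hf
  have h1 : ∀ a : ∀ j, A j,
      q (a i) * ∏ j ∈ Finset.univ.erase i, g j (a j) = ∏ j, f j (a j) := by
    intro a
    rw [← Finset.mul_prod_erase Finset.univ (fun j => f j (a j)) (Finset.mem_univ i)]
    congr 1
    · rw [hf, Function.update_self]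
    · apply Finset.prod_congr rfl
      intro j hj
      rw [hf, Function.update_of_ne (Finset.ne_of_mem_erase hj)]
  simp_rw [h1]
  rw [← Fintype.piFinset_univ, ← Finset.prod_univ_sum]
  apply Finset.prod_eq_one
  intro j _
  by_cases hj : j = i
  · subst hj; rw [hf, Function.update_self]; exact hq
  · rw [hf, Function.update_of_ne hj]; exact hg j

/-- In a finite Markov game, let `π` be an independent joint policy (each
`π i s` a distribution on `A i`) with value function `Vπ` (fixed point of `T_π`), and
let `μ : S → ℝ` be positive. Deviating values `V^{(π'_i, π_{-i})}` are encoded as fixed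
points of the corresponding Bellman operator. Then condition (i)
`Σ_s μ(s) V^{(π'_i,π_{-i})}(s) ≤ Σ_s μ(s) V^π(s)` for all `i, π'_i` is equivalent to
condition (ii) `V^{(π'_i,π_{-i})}(s) ≤ V^π(s)` for all `i, π'_i, s`. -/
theorem stmt9 {n : ℕ} {St : Type*} [Fintype St] {A : Fin n → Type*}
    [∀ i, Fintype (A i)] [∀ i, Nonempty (A i)]
    (P : St → (∀ i, A i) → St → ℝ) (r : St → (∀ i, A i) → ℝ) (γ : ℝ)
    (hP0 : ∀ s a s', 0 ≤ P s a s') (hP1 : ∀ s a, ∑ s', P s a s' = 1)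
    (hγ0 : 0 ≤ γ) (hγ1 : γ < 1)
    (π : (i : Fin n) → St → A i → ℝ)
    (hπ : ∀ i s, (∀ ai, 0 ≤ π i s ai) ∧ ∑ ai, π i s ai = 1)
    (Vπ : St → ℝ)
    (hVπ : ∀ s, Vπ s = ∑ a : ∀ i, A i, (∏ i, π i s (a i)) *
        (r s a + γ * ∑ s', P s a s' * Vπ s'))
    (μ : St → ℝ) (hμ : ∀ s, 0 < μ s) :
    ((∀ (i : Fin n) (π' : St → A i → ℝ),
        (∀ s, (∀ ai, 0 ≤ π' s ai) ∧ ∑ ai, π' s ai = 1) →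
        ∀ V' : St → ℝ,
          (∀ s, V' s = ∑ a : ∀ i, A i,
              (π' s (a i) * ∏ j ∈ Finset.univ.erase i, π j s (a j)) *
              (r s a + γ * ∑ s', P s a s' * V' s')) →
          ∑ s, μ s * V' s ≤ ∑ s, μ s * Vπ s)
      ↔
      (∀ (i : Fin n) (π' : St → A i → ℝ),
        (∀ s, (∀ ai, 0 ≤ π' s ai) ∧ ∑ ai, π' s ai = 1) →
        ∀ V' : St → ℝ,
          (∀ s, V' s = ∑ a : ∀ i, A i,
              (π' s (a i) * ∏ j ∈ Finset.univ.erase i, π j s (a j)) *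
              (r s a + γ * ∑ s', P s a s' * V' s')) →
          ∀ s, V' s ≤ Vπ s)) := by
  classical
  constructor
  · -- (i) → (ii)
    intro hi i π' hπ' V' hV' s0
    by_contra hcon
    push_neg at hcon
    -- hcon : Vπ s0 < V' s0
    set π'' : St → A i → ℝ := fun s => if Vπ s < V' s then π' s else π i s with hπ''def
    have hπ'' : ∀ s, (∀ ai, 0 ≤ π'' s ai) ∧ ∑ ai, π'' s ai = 1 := by
      intro s
      by_cases h : Vπ s < V' s
      · simp only [hπ''def, if_pos h]; exact hπ' s
      · simp only [hπ''def, if_neg h]; exact hπ i s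
    set p : St → (∀ j, A j) → ℝ :=
      fun s a => π'' s (a i) * ∏ j ∈ Finset.univ.erase i, π j s (a j) with hpdef
    have hp0 : ∀ s a, 0 ≤ p s a := by
      intro s a
      exact mul_nonneg ((hπ'' s).1 _)
        (Finset.prod_nonneg fun j _ => (hπ j s).1 _)
    have hp1 : ∀ s, ∑ a, p s a = 1 := by
      intro s
      exact dev_sum_one i (π'' s) (fun j => π j s) (hπ'' s).2 (fun j => (hπ j s).2)
    obtain ⟨V'', hfix, hge⟩ :=
      bellman_exists P r γ hP0 hP1 hγ0 hγ1 p hp0 hp1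
    set W : St → ℝ := fun s => max (V' s) (Vπ s) with hWdef
    have hW : ∀ s, W s ≤ ∑ a, p s a * (r s a + γ * ∑ s', P s a s' * W s') := by
      intro s
      by_cases h : Vπ s < V' s
      · have hWs : W s = V' s := max_eq_left h.le
        rw [hWs, hV' s]
        apply Finset.sum_le_sum
        intro a _
        have hps : p s a = π' s (a i) * ∏ j ∈ Finset.univ.erase i, π j s (a j) := by
          simp only [hpdef, hπ''def, if_pos h]
        rw [hps]
        gcongr
        · exact mul_nonneg ((hπ' s).1 _) (Finset.prod_nonneg fun j _ => (hπ j s).1 _)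
        · exact hP0 s a _
        · exact le_max_left _ _
      · have hWs : W s = Vπ s := max_eq_right (not_lt.mp h)
        rw [hWs]
        conv_lhs => rw [hVπ s]
        apply Finset.sum_le_sum
        intro a _
        have hps : p s a = (∏ j, π j s (a j)) *
            (1 : ℝ) := by
          simp only [hpdef, hπ''def, if_neg h, mul_one]
          rw [← Finset.mul_prod_erase Finset.univ (fun j => π j s (a j))
            (Finset.mem_univ i)]
        rw [hps, mul_one]
        gcongr
        · exact Finset.prod_nonneg fun j _ => (hπ j s).1 _
        · exact hP0 s a _
        · exact le_max_right _ _
    have hWle : ∀ s, W s ≤ V'' s := hge W hW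
    have hsum : ∑ s, μ s * V'' s ≤ ∑ s, μ s * Vπ s := hi i π'' hπ'' V'' hfix
    have hlt : ∑ s, μ s * Vπ s < ∑ s, μ s * W s := by
      apply Finset.sum_lt_sum
      · intro s _
        exact mul_le_mul_of_nonneg_left (le_max_right _ _) (hμ s).le
      · exact ⟨s0, Finset.mem_univ s0,
          mul_lt_mul_of_pos_left (lt_of_lt_of_le hcon (le_max_left _ _)) (hμ s0)⟩
    have hle2 : ∑ s, μ s * W s ≤ ∑ s, μ s * V'' s :=
      Finset.sum_le_sum fun s _ => mul_le_mul_of_nonneg_left (hWle s) (hμ s).le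
    linarith
  · -- (ii) → (i)
    intro h i π' hπ' V' hV'
    exact Finset.sum_le_sum fun s _ =>
      mul_le_mul_of_nonneg_left (h i π' hπ' V' hV' s) (hμ s).le
end

section
/- Let {π^k} be a sequence of deterministic action-dependent policies generated by Algorithm AD-MPI, associated with an ADG G_d. Then for every k ≥ 0 and every s ∈ S, T_{π^{k+1}} V^{π^k}(s) = Q^{V^{π^k}}(s, ā_{π^{k+1}}(s)) ≥ Q^{V^{π^k}}(s, ā_{π^k}(s)) = V^{π^k}(s). -/
/-- The one-step lookahead value `Q^V(s,a) = r(s,a) + γ Σ_{s'} P(s'|s,a) V(s')`. -/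
def QV {n : ℕ} {St : Type*} [Fintype St] {A : Fin n → Type*}
    (P : St → (∀ i, A i) → St → ℝ) (r : St → (∀ i, A i) → ℝ) (γ : ℝ)
    (V : St → ℝ) : St → (∀ i, A i) → ℝ :=
  fun s a => r s a + γ * ∑ s', P s a s' * V s'

/-- The joint action induced by a deterministic action-dependent policy `π`, with the
coordinates in `F` clamped to the values of `a'`: the agents outside `F` evaluate their
policies in increasing index order (well defined since `Ed j i → j < i`), each `π i`
conditioning on the actions of its in-neighbors `N_d(i) = {j | Ed j i}`. Taking
`F = ∅` yields the induced joint action `ā_π(s)`. -/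
def indAct {n : ℕ} {St : Type*} {A : Fin n → Type*}
    (Ed : Fin n → Fin n → Prop) [DecidableRel Ed]
    (hEd : ∀ i j : Fin n, Ed j i → j < i)
    (π : (i : Fin n) → St → ((j : {j : Fin n // Ed j i}) → A j.1) → A i)
    (F : Finset (Fin n)) (a' : ∀ i, A i) (s : St) : (i : Fin n) → A i
  | i =>
    if i ∈ F then a' i
    else π i s (fun j => indAct Ed hEd π F a' s j.1)
termination_by i => (i : ℕ)
decreasing_by exact hEd i j.1 j.2

/-- The full joint action built from clamped values `c` on `N_d(i)` and a value `ai`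
for agent `i` (coordinates outside `N_d[i]` are filled arbitrarily; they are irrelevant
when this vector is used to clamp only the coordinates in `N_d[i]`). -/
noncomputable def cvec {n : ℕ} {A : Fin n → Type*} [∀ i, Nonempty (A i)]
    (Ed : Fin n → Fin n → Prop) [DecidableRel Ed] (i : Fin n)
    (c : (j : {j : Fin n // Ed j i}) → A j.1) (ai : A i) : ∀ j, A j :=
  fun j =>
    if h : Ed j i then c ⟨j, h⟩
    else if h : j = i then cast (congrArg A h.symm) ai
    else Classical.arbitrary (A j)

/-- `(πseq, Vseq)` is an execution of Algorithm AD-MPI: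
* policy evaluation: `Vseq k` is the value function `V^{π^k}`, i.e. the fixed point of
  `T_{π^k} V (s) = Q^V(s, ā_{π^k}(s))`;
* policy iteration: for each agent `i` (in increasing order), `πseq (k+1) i (s, c)`
  maximizes `a_i ↦ Q^{V^{π^k}}(s, c, a_i, ā_{π^{k,i}_{-N_d[i]}}(s, c, a_i))`, where
  `π^{k,i}` uses the already-updated policies `π^{k+1}_j` for `j < i` and `π^k_j`
  otherwise, and the coordinates in `N_d[i]` are clamped to `(c, a_i)`. -/
noncomputable def ADMPI {n : ℕ} {St : Type*} [Fintype St] {A : Fin n → Type*}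
    [∀ i, Fintype (A i)] [∀ i, Nonempty (A i)]
    (P : St → (∀ i, A i) → St → ℝ) (r : St → (∀ i, A i) → ℝ) (γ : ℝ)
    (Ed : Fin n → Fin n → Prop) [DecidableRel Ed]
    (hEd : ∀ i j : Fin n, Ed j i → j < i)
    (πseq : ℕ → (i : Fin n) → St → ((j : {j : Fin n // Ed j i}) → A j.1) → A i)
    (Vseq : ℕ → St → ℝ) : Prop :=
  (∀ (k : ℕ) (s : St) (a' : ∀ i, A i),
      Vseq k s = QV P r γ (Vseq k) s (indAct Ed hEd (πseq k) ∅ a' s)) ∧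
  (∀ (k : ℕ) (i : Fin n) (s : St) (c : (j : {j : Fin n // Ed j i}) → A j.1)
      (ai : A i),
      QV P r γ (Vseq k) s
        (indAct Ed hEd (fun j => if j < i then πseq (k+1) j else πseq k j)
          (Finset.univ.filter fun j => Ed j i ∨ j = i) (cvec Ed i c ai) s)
      ≤ QV P r γ (Vseq k) s
        (indAct Ed hEd (fun j => if j < i then πseq (k+1) j else πseq k j)
          (Finset.univ.filter fun j => Ed j i ∨ j = i)
          (cvec Ed i c (πseq (k+1) i s c)) s))

/-!
Interpolate between `π^k` and `π^{k+1}` by the hybrid policies that use `π^{k+1}_j` for the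
first `m` agents and `π^k_j` for the others. Passing from the `m`-th to the `(m+1)`-st
hybrid only changes the action of agent `m`, and with the actions of its in-neighbours
clamped to their common value, the two induced joint actions are exactly the two sides of
the improvement inequality that AD-MPI guarantees for agent `m`. Chaining these `n`
inequalities compares `ā_{π^k}(s)` with `ā_{π^{k+1}}(s)`.
-/

abbrev ADPolicy {n : ℕ} (Ed : Fin n → Fin n → Prop) (St : Type*) (A : Fin n → Type*) :=
  (i : Fin n) → St → ((j : {j : Fin n // Ed j i}) → A j.1) → A i

section ADPolicy

variable {n : ℕ} {St : Type*} {A : Fin n → Type*} {Ed : Fin n → Fin n → Prop}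

def hybridPolicy (π π' : ADPolicy Ed St A) (m : ℕ) : ADPolicy Ed St A :=
  fun j => if (j : ℕ) < m then π' j else π j

@[simp]
lemma hybridPolicy_zero (π π' : ADPolicy Ed St A) : hybridPolicy π π' 0 = π := by
  funext j
  simp [hybridPolicy]

lemma hybridPolicy_of_le {π π' : ADPolicy Ed St A} {m : ℕ} (hm : n ≤ m) :
    hybridPolicy π π' m = π' := by
  funext j
  simp [hybridPolicy, j.isLt.trans_le hm]

lemma hybridPolicy_succ_of_ne (π π' : ADPolicy Ed St A) {m : ℕ} {j : Fin n}
    (hj : (j : ℕ) ≠ m) : hybridPolicy π π' (m + 1) j = hybridPolicy π π' m j := by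
  simp only [hybridPolicy]
  congr 1
  exact propext (by omega)

lemma hybridPolicy_val (π π' : ADPolicy Ed St A) (i : Fin n) :
    hybridPolicy π π' i = fun j => if j < i then π' j else π j := by
  rfl

variable [DecidableRel Ed] {hEd : ∀ i j : Fin n, Ed j i → j < i}

lemma indAct_apply (π : ADPolicy Ed St A) (F : Finset (Fin n)) (a' : ∀ i, A i) (s : St)
    (i : Fin n) :
    indAct Ed hEd π F a' s i =
      if i ∈ F then a' i else π i s (fun j => indAct Ed hEd π F a' s j.1) := by
  rw [indAct]

lemma indAct_empty_apply (π : ADPolicy Ed St A) (a' : ∀ i, A i) (s : St) (i : Fin n) :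
    indAct Ed hEd π ∅ a' s i = π i s (fun j => indAct Ed hEd π ∅ a' s j.1) := by
  rw [indAct_apply, if_neg (Finset.notMem_empty i)]

lemma indAct_clamp_eq (π π' : ADPolicy Ed St A) (F : Finset (Fin n)) (a'' b : ∀ i, A i)
    (s : St) (hπ : ∀ j ∉ F, π j s = π' j s)
    (ha'' : ∀ j ∈ F, a'' j = indAct Ed hEd π' ∅ b s j) :
    indAct Ed hEd π F a'' s = indAct Ed hEd π' ∅ b s := by
  funext i
  induction i using WellFoundedLT.induction with
  | _ i ih =>
    by_cases hi : i ∈ F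
    · rw [indAct_apply, if_pos hi, ha'' i hi]
    · rw [indAct_apply, if_neg hi, indAct_empty_apply, hπ i hi]
      congr 1
      funext j
      exact ih j.1 (hEd i j.1 j.2)

lemma indAct_empty_eq_of_forall_le (π π' : ADPolicy Ed St A) (b b' : ∀ i, A i) (s : St)
    (i : Fin n) (hπ : ∀ j ≤ i, π j s = π' j s) :
    indAct Ed hEd π ∅ b s i = indAct Ed hEd π' ∅ b' s i := by
  induction i using WellFoundedLT.induction with
  | _ i ih =>
    rw [indAct_empty_apply, indAct_empty_apply, hπ i le_rfl]
    congr 1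
    funext j
    exact ih j.1 (hEd i j.1 j.2) fun j' hj' => hπ j' (hj'.trans (hEd i j.1 j.2).le)

lemma indAct_hybridPolicy_succ_of_lt (π π' : ADPolicy Ed St A) (a' : ∀ i, A i) (s : St)
    {m : ℕ} {j : Fin n} (hj : (j : ℕ) < m) :
    indAct Ed hEd (hybridPolicy π π' (m + 1)) ∅ a' s j =
      indAct Ed hEd (hybridPolicy π π' m) ∅ a' s j :=
  indAct_empty_eq_of_forall_le _ _ a' a' s j fun j' hj' => by
    rw [hybridPolicy_succ_of_ne]
    exact (Fin.le_def.mp hj' |>.trans_lt hj).ne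

end ADPolicy

section AgentwiseImprovement

variable {n : ℕ} {St : Type*} {A : Fin n → Type*} [∀ i, Nonempty (A i)]
  {Ed : Fin n → Fin n → Prop} [DecidableRel Ed] {hEd : ∀ i j : Fin n, Ed j i → j < i}

lemma cvec_apply_of_adj (i : Fin n) (c : (j : {j : Fin n // Ed j i}) → A j.1) (ai : A i)
    {j : Fin n} (hj : Ed j i) : cvec Ed i c ai j = c ⟨j, hj⟩ := by
  rw [cvec, dif_pos hj]

lemma cvec_apply_self (i : Fin n) (c : (j : {j : Fin n // Ed j i}) → A j.1) (ai : A i)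
    (hii : ¬ Ed i i) : cvec Ed i c ai i = ai := by
  rw [cvec, dif_neg hii, dif_pos rfl, cast_eq]

lemma indAct_clamp_cvec_eq (π π' : ADPolicy Ed St A) (b : ∀ i, A i) (s : St) (i : Fin n)
    (hπ : ∀ j ≠ i, π j s = π' j s) (c : (j : {j : Fin n // Ed j i}) → A j.1)
    (hc : ∀ j, c j = indAct Ed hEd π' ∅ b s j.1) :
    indAct Ed hEd π (Finset.univ.filter fun j => Ed j i ∨ j = i)
        (cvec Ed i c (indAct Ed hEd π' ∅ b s i)) s =
      indAct Ed hEd π' ∅ b s := by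
  refine indAct_clamp_eq π π' _ _ b s (fun j hj => hπ j ?_) fun j hj => ?_
  · rintro rfl
    simp at hj
  · rcases (Finset.mem_filter.mp hj).2 with hadj | rfl
    · rw [cvec_apply_of_adj i c _ hadj, hc]
    · rw [cvec_apply_self j c _ fun h => (hEd j j h).false]

variable {β : Type*} [Preorder β] (f : (∀ i, A i) → β) {π π' : ADPolicy Ed St A}
  (a' : ∀ i, A i) (s : St)

lemma le_indAct_hybridPolicy_succ (i : Fin n)
    (himp : ∀ (c : (j : {j : Fin n // Ed j i}) → A j.1) (ai : A i),
      f (indAct Ed hEd (hybridPolicy π π' i)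
          (Finset.univ.filter fun j => Ed j i ∨ j = i) (cvec Ed i c ai) s)
        ≤ f (indAct Ed hEd (hybridPolicy π π' i)
          (Finset.univ.filter fun j => Ed j i ∨ j = i) (cvec Ed i c (π' i s c)) s)) :
    f (indAct Ed hEd (hybridPolicy π π' i) ∅ a' s) ≤
      f (indAct Ed hEd (hybridPolicy π π' (i + 1)) ∅ a' s) := by
  set c : (j : {j : Fin n // Ed j i}) → A j.1 :=
    fun j => indAct Ed hEd (hybridPolicy π π' i) ∅ a' s j.1
  have hprefix : ∀ j : {j : Fin n // Ed j i},
      c j = indAct Ed hEd (hybridPolicy π π' (i + 1)) ∅ a' s j.1 := fun j =>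
    (indAct_hybridPolicy_succ_of_lt π π' a' s (hEd i j.1 j.2)).symm
  have hold : indAct Ed hEd (hybridPolicy π π' i) ∅ a' s i = π i s c := by
    rw [indAct_empty_apply]
    simp [hybridPolicy, c]
  have hnew : indAct Ed hEd (hybridPolicy π π' (i + 1)) ∅ a' s i = π' i s c := by
    rw [indAct_empty_apply, ← funext hprefix]
    simp [hybridPolicy]
  have hclamp_old : indAct Ed hEd (hybridPolicy π π' i)
      (Finset.univ.filter fun j => Ed j i ∨ j = i) (cvec Ed i c (π i s c)) s =
        indAct Ed hEd (hybridPolicy π π' i) ∅ a' s := by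
    rw [← hold]
    exact indAct_clamp_cvec_eq _ _ a' s i (fun _ _ => rfl) c fun _ => rfl
  have hclamp_new : indAct Ed hEd (hybridPolicy π π' i)
      (Finset.univ.filter fun j => Ed j i ∨ j = i) (cvec Ed i c (π' i s c)) s =
        indAct Ed hEd (hybridPolicy π π' (i + 1)) ∅ a' s := by
    rw [← hnew]
    refine indAct_clamp_cvec_eq _ _ a' s i (fun j hj => ?_) c hprefix
    exact congrFun (hybridPolicy_succ_of_ne π π' (Fin.val_ne_of_ne hj)).symm s
  simpa only [hclamp_old, hclamp_new] using himp c (π i s c)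

theorem le_indAct_of_agentwise_improvement
    (himp : ∀ (i : Fin n) (c : (j : {j : Fin n // Ed j i}) → A j.1) (ai : A i),
      f (indAct Ed hEd (fun j => if j < i then π' j else π j)
          (Finset.univ.filter fun j => Ed j i ∨ j = i) (cvec Ed i c ai) s)
        ≤ f (indAct Ed hEd (fun j => if j < i then π' j else π j)
          (Finset.univ.filter fun j => Ed j i ∨ j = i) (cvec Ed i c (π' i s c)) s)) :
    f (indAct Ed hEd π ∅ a' s) ≤ f (indAct Ed hEd π' ∅ a' s) := by
  have hchain : ∀ m ≤ n, f (indAct Ed hEd π ∅ a' s) ≤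
      f (indAct Ed hEd (hybridPolicy π π' m) ∅ a' s) := by
    intro m
    induction m with
    | zero => simp
    | succ m ih =>
      intro hm
      refine (ih (by omega)).trans (le_indAct_hybridPolicy_succ f a' s ⟨m, hm⟩ ?_)
      simpa only [← hybridPolicy_val] using himp ⟨m, hm⟩
  simpa only [hybridPolicy_of_le le_rfl] using hchain n le_rfl

end AgentwiseImprovement

theorem stmt11_general {n : ℕ} {St : Type*} [Fintype St] {A : Fin n → Type*}
    [∀ i, Fintype (A i)] [∀ i, Nonempty (A i)]
    (P : St → (∀ i, A i) → St → ℝ) (r : St → (∀ i, A i) → ℝ) (γ : ℝ)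
    (Ed : Fin n → Fin n → Prop) [DecidableRel Ed]
    (hEd : ∀ i j : Fin n, Ed j i → j < i)
    (πseq : ℕ → (i : Fin n) → St → ((j : {j : Fin n // Ed j i}) → A j.1) → A i)
    (Vseq : ℕ → St → ℝ)
    (hADMPI : ADMPI P r γ Ed hEd πseq Vseq) :
    ∀ (k : ℕ) (s : St) (a' : ∀ i, A i),
      QV P r γ (Vseq k) s (indAct Ed hEd (πseq k) ∅ a' s) = Vseq k s ∧
      QV P r γ (Vseq k) s (indAct Ed hEd (πseq k) ∅ a' s)
        ≤ QV P r γ (Vseq k) s (indAct Ed hEd (πseq (k+1)) ∅ a' s) := by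
  intro k s a'
  exact ⟨(hADMPI.1 k s a').symm,
    le_indAct_of_agentwise_improvement _ a' s fun i c ai => hADMPI.2 k i s c ai⟩

/-- along any execution of Algorithm AD-MPI,
`T_{π^{k+1}} V^{π^k}(s) = Q^{V^{π^k}}(s, ā_{π^{k+1}}(s)) ≥ Q^{V^{π^k}}(s, ā_{π^k}(s))
 = V^{π^k}(s)` for every `k ≥ 0` and `s`. -/
theorem stmt11 {n : ℕ} {St : Type*} [Fintype St] {A : Fin n → Type*}
    [∀ i, Fintype (A i)] [∀ i, Nonempty (A i)]
    (P : St → (∀ i, A i) → St → ℝ) (r : St → (∀ i, A i) → ℝ) (γ : ℝ)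
    (hP0 : ∀ s a s', 0 ≤ P s a s') (hP1 : ∀ s a, ∑ s', P s a s' = 1)
    (hγ0 : 0 ≤ γ) (hγ1 : γ < 1)
    (Ed : Fin n → Fin n → Prop) [DecidableRel Ed]
    (hEd : ∀ i j : Fin n, Ed j i → j < i)
    (πseq : ℕ → (i : Fin n) → St → ((j : {j : Fin n // Ed j i}) → A j.1) → A i)
    (Vseq : ℕ → St → ℝ)
    (hADMPI : ADMPI P r γ Ed hEd πseq Vseq) :
    ∀ (k : ℕ) (s : St) (a' : ∀ i, A i),
      QV P r γ (Vseq k) s (indAct Ed hEd (πseq k) ∅ a' s) = Vseq k s ∧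
      QV P r γ (Vseq k) s (indAct Ed hEd (πseq k) ∅ a' s)
        ≤ QV P r γ (Vseq k) s (indAct Ed hEd (πseq (k+1)) ∅ a' s) :=
  stmt11_general P r γ Ed hEd πseq Vseq hADMPI
end
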